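/- arXiv:1107.0062 — 2 statements merged into one kernel-verified Lean document; each statement's English description precedes it below -/
import Mathlib

section
/- Let (a_k) be a sequence defined by a prefix of length p followed by infinite repetitions of a suffix block of positive length s, i.e., a_{k+s} = a_k for all k ≥ p. If T(k) denotes the k-th time a distinguished proposition π is satisfied along (a_k), and π is satisfied at least once in the suffix block, then limsup_{i→∞} (T(i+1) − T(i)) equals the maximum gap between consecutive satisfactions of π within one period (computed over the eventually periodic part). -/
/-!
Once the run is periodic, so is the set of indices where `π` holds: shifting an index by the
period `s` raises its rank among the satisfaction indices by the number `n` of satisfactions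
per block, and raises its time by the duration `t (p + s) - t p` of a block. Hence
`T (i + n) = T i + (t (p + s) - t p)` for large `i`, the gap sequence is eventually
`n`-periodic, and the limsup of an eventually periodic sequence is its maximum over a period.
-/

open Filter Set

section LimsupPeriodic

variable {α : Type*} [ConditionallyCompleteLinearOrder α]

theorem Function.Periodic.limsup_eq_sSup_image_Iio {f : ℕ → α} {n : ℕ}
    (hf : Function.Periodic f n) (hn : 0 < n) :
    limsup f atTop = sSup (f '' Iio n) := by
  have hfin : (f '' Iio n).Finite := (finite_Iio n).image f
  have hmem : ∀ i, f i ∈ f '' Iio n := fun i => ⟨i % n, Nat.mod_lt i hn, hf.map_mod_nat i⟩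
  obtain ⟨j, -, hj⟩ := (Set.Nonempty.image f ⟨0, hn⟩).csSup_mem hfin
  have hle : ∀ᶠ i in atTop, f i ≤ sSup (f '' Iio n) :=
    Eventually.of_forall fun i => le_csSup hfin.bddAbove (hmem i)
  have hge : ∃ᶠ i in atTop, sSup (f '' Iio n) ≤ f i := by
    refine frequently_atTop.2 fun m => ⟨j + m * n, ?_, ?_⟩
    · nlinarith
    · exact hj.symm.trans_le (hf.nat_mul m j).ge
  exact le_antisymm (limsup_le_of_le (IsCoboundedUnder.of_frequently_ge hge) hle)
    (le_limsup_of_frequently_le hge (isBoundedUnder_of_eventually_le hle))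

theorem limsup_eq_sSup_image_Ico_of_eventually_periodic {f : ℕ → α} {N n : ℕ} (hn : 0 < n)
    (hf : ∀ i, N ≤ i → f (i + n) = f i) :
    limsup f atTop = sSup (f '' Ico N (N + n)) := by
  have hshift : Function.Periodic (fun i => f (i + N)) n := fun i => by
    simp only [add_right_comm i n N]
    exact hf _ (Nat.le_add_left N i)
  have himage : (fun i => f (i + N)) '' Iio n = f '' Ico N (N + n) := by
    ext x
    constructor
    · rintro ⟨i, hi, rfl⟩
      exact ⟨i + N, ⟨by omega, by rw [mem_Iio] at hi; omega⟩, rfl⟩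
    · rintro ⟨i, ⟨hNi, hin⟩, rfl⟩
      exact ⟨i - N, by rw [mem_Iio]; omega, by simp only [Nat.sub_add_cancel hNi]⟩
  rw [← limsup_nat_add f N, hshift.limsup_eq_sSup_image_Iio hn, himage]

end LimsupPeriodic

theorem sub_add_period_eq_of_periodic_increments {G : Type*} [AddCommGroup G] {t : ℕ → G}
    {p s : ℕ} (h : ∀ k, p ≤ k → t (k + s + 1) - t (k + s) = t (k + 1) - t k) {k : ℕ}
    (hk : p ≤ k) : t (k + s) - t k = t (p + s) - t p := by
  induction k, hk using Nat.le_induction with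
  | base => rfl
  | succ k hk ih =>
    calc t (k + 1 + s) - t (k + 1)
        = (t (k + s + 1) - t (k + s)) - (t (k + 1) - t k) + (t (k + s) - t k) := by
          rw [add_right_comm]; abel
      _ = t (p + s) - t p := by rw [h k hk, ih, sub_self, zero_add]

namespace Nat

variable {Q : ℕ → Prop} {p s : ℕ}

theorem infinite_setOf_of_periodic (hQ : ∀ k, p ≤ k → (Q (k + s) ↔ Q k)) (hs : 0 < s)
    {k₀ : ℕ} (hpk₀ : p ≤ k₀) (hk₀ : Q k₀) : (Set.ofPred Q).Infinite := by
  have hprog : ∀ m, Q (k₀ + m * s) := by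
    intro m
    induction m with
    | zero => simpa using hk₀
    | succ m ih =>
      rw [add_mul, one_mul, ← add_assoc]
      exact (hQ _ (hpk₀.trans (le_add_right _ _))).2 ih
  refine infinite_of_injective_forall_mem (fun m m' h => ?_) hprog
  exact eq_of_mul_eq_mul_right hs (add_left_cancel h)

variable [DecidablePred Q]

theorem count_add_period (hQ : ∀ k, p ≤ k → (Q (k + s) ↔ Q k)) {k : ℕ} (hk : p ≤ k) :
    count Q (k + s) + count Q p = count Q k + count Q (p + s) := by
  induction k, hk using le_induction with
  | base => rw [add_comm]
  | succ k hk ih =>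
    rw [add_right_comm, count_succ, count_succ, if_congr (hQ k hk) rfl rfl]
    omega

theorem nth_add_of_periodic (hQ : ∀ k, p ≤ k → (Q (k + s) ↔ Q k))
    (hinf : (Set.ofPred Q).Infinite) {i : ℕ} (hi : count Q p ≤ i) :
    nth Q (i + (count Q (p + s) - count Q p)) = nth Q i + s := by
  have hp : p ≤ nth Q i := (count_le_iff_le_nth hinf).1 hi
  have hcount : count Q (nth Q i + s) = i + (count Q (p + s) - count Q p) := by
    have := count_add_period hQ hp
    have := count_monotone Q (le_add_right p s)
    rw [count_nth_of_infinite hinf] at *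
    omega
  rw [← hcount, nth_count ((hQ _ hp).2 (nth_mem_of_infinite hinf i))]

end Nat

theorem stmt4_general {S : Type*} (a : ℕ → S) (p s : ℕ) (hs : 0 < s)
    (hper : ∀ k, p ≤ k → a (k + s) = a k)
    (w : S → S → ℝ)
    (t : ℕ → ℝ) (ht : ∀ k, t (k + 1) = t k + w (a k) (a (k + 1)))
    (π : S → Prop) (hπ : ∃ k, p ≤ k ∧ k < p + s ∧ π (a k))
    (T : ℕ → ℝ) (hT : ∀ i, T i = t (Nat.nth (fun k => π (a k)) i)) :
    ∃ N n : ℕ, 0 < n ∧ (∀ i, N ≤ i → T (i + n) = T i + (t (p + s) - t p)) ∧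
      Filter.limsup (fun i => T (i + 1) - T i) Filter.atTop =
        sSup ((fun i => T (i + 1) - T i) '' Set.Ico N (N + n)) := by
  classical
  obtain ⟨k₀, hpk₀, hk₀s, hk₀⟩ := hπ
  set Q : ℕ → Prop := fun k => π (a k)
  have hQ : ∀ k, p ≤ k → (Q (k + s) ↔ Q k) := fun k hk => by simp only [Q, hper k hk]
  have hinf : (Set.ofPred Q).Infinite := Nat.infinite_setOf_of_periodic hQ hs hpk₀ hk₀
  have hn : 0 < Nat.count Q (p + s) - Nat.count Q p := Nat.sub_pos_of_lt <|
    (Nat.count_monotone Q hpk₀).trans_lt (Nat.count_strict_mono hk₀ hk₀s)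
  have ht_per : ∀ k, p ≤ k → t (k + s) = t k + (t (p + s) - t p) := fun k hk =>
    eq_add_of_sub_eq' <| sub_add_period_eq_of_periodic_increments (fun j hj => by
      rw [ht, ht, add_right_comm, hper j hj, hper (j + 1) (by omega)]; ring) hk
  have hT_per : ∀ i, Nat.count Q p ≤ i →
      T (i + (Nat.count Q (p + s) - Nat.count Q p)) = T i + (t (p + s) - t p) := fun i hi => by
    rw [hT, hT, Nat.nth_add_of_periodic hQ hinf hi,
      ht_per _ ((Nat.count_le_iff_le_nth hinf).1 hi)]
  refine ⟨_, _, hn, hT_per, limsup_eq_sSup_image_Ico_of_eventually_periodic hn fun i hi => ?_⟩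
  rw [add_right_comm, hT_per _ (by omega), hT_per i hi]
  ring

/-- For a run `a` in prefix–suffix form (prefix of length `p`, suffix of period `s > 0`),
with positive travel weights `w` generating times `t`, and a proposition `π` satisfied
somewhere in the suffix block, the limsup of gaps between consecutive satisfaction times `T`
of `π` equals the supremum (maximum) of the gaps within one period of the periodic part. -/
theorem stmt4 {S : Type*} (a : ℕ → S) (p s : ℕ) (hs : 0 < s)
    (hper : ∀ k, p ≤ k → a (k + s) = a k)
    (w : S → S → ℝ) (hw : ∀ x y, 0 < w x y)
    (t : ℕ → ℝ) (ht0 : t 0 = 0) (ht : ∀ k, t (k + 1) = t k + w (a k) (a (k + 1)))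
    (π : S → Prop) (hπ : ∃ k, p ≤ k ∧ k < p + s ∧ π (a k))
    (T : ℕ → ℝ) (hT : ∀ i, T i = t (Nat.nth (fun k => π (a k)) i)) :
    ∃ N n : ℕ, 0 < n ∧ (∀ i, N ≤ i → T (i + n) = T i + (t (p + s) - t p)) ∧
      Filter.limsup (fun i => T (i + 1) - T i) Filter.atTop =
        sSup ((fun i => T (i + 1) - T i) '' Set.Ico N (N + n)) :=
  stmt4_general a p s hs hper w t ht π hπ T hT
end

section
/- If a sequence of times T: ℕ → ℝ is strictly increasing, unbounded, and eventually periodic with period time P > 0 and n ≥ 1 satisfactions per period (i.e., there exist N and n such that T(i+n) = T(i) + P for all i ≥ N), then limsup_{i→∞}(T(i+1) − T(i)) = max_{N ≤ i < N+n} (T(i+1) − T(i)), and this limsup is finite. -/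
/-!
Past the index `N` the gaps `T (i + 1) - T i` repeat with period `n`, so they take only finitely
many values, each one infinitely often. Hence the gaps are bounded, and their limsup is the largest
gap of one period `[N, N + n)`: it bounds all later gaps and is attained again in every period.
-/

open Filter Finset

def EventuallyPeriodic {α : Type*} (f : ℕ → α) (N n : ℕ) : Prop :=
  ∀ i, N ≤ i → f (i + n) = f i

namespace EventuallyPeriodic

variable {α : Type*} {f : ℕ → α} {N n : ℕ}

theorem periodic_shift (hf : EventuallyPeriodic f N n) :
    Function.Periodic (fun m => f (N + m)) n := fun m => by
  simpa only [add_assoc] using hf (N + m) (Nat.le_add_right N m)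

theorem exists_mem_Ico_eq (hf : EventuallyPeriodic f N n) (hn : 0 < n) {i : ℕ} (hi : N ≤ i) :
    ∃ j ∈ Ico N (N + n), f j = f i := by
  refine ⟨N + (i - N) % n, mem_Ico.2 ⟨Nat.le_add_right _ _, ?_⟩, ?_⟩
  · have := Nat.mod_lt (i - N) hn
    omega
  · simpa only [Nat.add_sub_cancel' hi] using hf.periodic_shift.map_mod_nat (i - N)

theorem frequently_eq (hf : EventuallyPeriodic f N n) (hn : 0 < n) {j : ℕ} (hj : N ≤ j) :
    ∃ᶠ i in atTop, f i = f j := by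
  refine frequently_atTop.2 fun a => ⟨j + a * n, ?_, ?_⟩
  · nlinarith
  · simpa only [Nat.cast_id, ← add_assoc, Nat.add_sub_cancel' hj] using
      (hf.periodic_shift.nat_mul a) (j - N)

theorem finite_range (hf : EventuallyPeriodic f N n) (hn : 0 < n) : (Set.range f).Finite := by
  refine ((Set.finite_Iio (N + n)).image f).subset ?_
  rintro _ ⟨i, rfl⟩
  rcases lt_or_ge i N with hi | hi
  · exact ⟨i, by simp only [Set.mem_Iio]; omega, rfl⟩
  · obtain ⟨j, hj, hji⟩ := hf.exists_mem_Ico_eq hn hi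
    exact ⟨j, Set.mem_Iio.2 (mem_Ico.1 hj).2, hji⟩

theorem limsup_eq_sup'_Ico [ConditionallyCompleteLinearOrder α]
    (hf : EventuallyPeriodic f N n) (hn : 0 < n) :
    limsup f atTop = (Ico N (N + n)).sup' (nonempty_Ico.2 (by omega)) f := by
  have hne : (Ico N (N + n)).Nonempty := nonempty_Ico.2 (by omega)
  set M := (Ico N (N + n)).sup' hne f
  have hle : ∀ᶠ i in atTop, f i ≤ M := eventually_atTop.2 ⟨N, fun i hi => by
    obtain ⟨j, hj, hji⟩ := hf.exists_mem_Ico_eq hn hi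
    exact hji ▸ le_sup' f hj⟩
  obtain ⟨j, hj, hjM⟩ := exists_mem_eq_sup' hne f
  have hge : ∃ᶠ i in atTop, M ≤ f i :=
    (hf.frequently_eq hn (mem_Ico.1 hj).1).mono fun _ hi => hjM.le.trans_eq hi.symm
  exact le_antisymm (limsup_le_of_le (IsCoboundedUnder.of_frequently_ge hge) hle)
    (le_limsup_of_frequently_le hge ⟨M, eventually_map.2 hle⟩)

end EventuallyPeriodic

theorem eventuallyPeriodic_sub_of_add_const {G : Type*} [AddCommGroup G] {T : ℕ → G} {N n : ℕ}
    {P : G} (hper : ∀ i, N ≤ i → T (i + n) = T i + P) :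
    EventuallyPeriodic (fun i => T (i + 1) - T i) N n := fun i hi => by
  simp only [Nat.add_right_comm i n 1, hper i hi, hper (i + 1) (by omega), add_sub_add_right_eq_sub]

/-- If `T : ℕ → ℝ` is strictly increasing, unbounded and eventually periodic (with `n ≥ 1`
satisfactions per period and period time `P > 0`), then
`limsup (T (i+1) - T i) = max_{N ≤ i < N + n} (T (i+1) - T i)`, and the gaps are bounded. -/
theorem stmt5 (T : ℕ → ℝ)
    (N n : ℕ) (hn : 1 ≤ n) (P : ℝ)
    (hper : ∀ i, N ≤ i → T (i + n) = T i + P) :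
    Filter.limsup (fun i => T (i + 1) - T i) Filter.atTop =
      (Finset.Ico N (N + n)).sup' (by rw [Finset.nonempty_Ico]; omega)
        (fun i => T (i + 1) - T i) ∧
    BddAbove (Set.range fun i => T (i + 1) - T i) := by
  have hgaps := eventuallyPeriodic_sub_of_add_const hper
  exact ⟨hgaps.limsup_eq_sup'_Ico hn, (hgaps.finite_range hn).bddAbove⟩
end
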